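/- arXiv:1311.7475 — 5 statements merged into one kernel-verified Lean document; each statement's English description precedes it below -/
import Mathlib

section
/- Let c > 0, let K : [0,∞) → ℝ be continuous, and let f solve f'' + K·f = 0 on [0,∞) with f(0) = c and f'(0) = 0. If K(0) > 0, f'(t) ≠ 0 for every t > 0, and f(t) > 0 for all t ∈ [0,∞), then there exists t > 0 with K(t) < 0. -/
open Set

/-! If `K ≥ 0` on `(0, ∞)`, then `f'' = -K f ≤ 0` there because `f > 0`, so `f'` is antitone and
`f' ≤ f' 0 = 0`; since `f'` never vanishes, `f' 1 < 0`. The concave function `f` then lies below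
its tangent line at `1`, which has negative slope, so `f` becomes nonpositive somewhere. -/

theorem antitoneOn_Ici_of_hasDerivWithinAt_nonpos {g g' : ℝ → ℝ} {a : ℝ}
    (hder : ∀ x ∈ Ici a, HasDerivWithinAt g (g' x) (Ici a) x) (hnonpos : ∀ x > a, g' x ≤ 0) :
    AntitoneOn g (Ici a) :=
  antitoneOn_of_hasDerivWithinAt_nonpos (convex_Ici a)
    (fun x hx => (hder x hx).continuousWithinAt)
    (fun x hx => by
      rw [interior_Ici] at hx ⊢
      exact (hder x (mem_Ici.2 hx.le)).mono Ioi_subset_Ici_self)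
    (fun x hx => hnonpos x (by rwa [interior_Ici] at hx))

theorem le_add_mul_sub_of_hasDerivWithinAt_of_antitoneOn {f f' : ℝ → ℝ} {a b t : ℝ}
    (hder : ∀ x ∈ Ici a, HasDerivWithinAt f (f' x) (Ici a) x) (hanti : AntitoneOn f' (Ici a))
    (hab : a ≤ b) (hbt : b ≤ t) :
    f t ≤ f b + f' b * (t - b) := by
  have hsub : Ici b ⊆ Ici a := Ici_subset_Ici.2 hab
  have hg : AntitoneOn (fun x => f x - f' b * x) (Ici b) := by
    refine antitoneOn_Ici_of_hasDerivWithinAt_nonpos (g' := fun x => f' x - f' b)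
      (fun x hx => ((hder x (hsub hx)).mono hsub).sub (hasDerivWithinAt_id x _ |>.const_mul _)
        |>.congr_deriv (by ring)) fun x hx => ?_
    have hf'_le := hanti (hsub self_mem_Ici) (hsub (mem_Ici.2 hx.le)) hx.le
    linarith
  have hg_le := hg self_mem_Ici (mem_Ici.2 hbt) hbt
  linarith

theorem exists_nonpos_of_hasDerivWithinAt_of_antitoneOn {f f' : ℝ → ℝ} {a b : ℝ}
    (hder : ∀ x ∈ Ici a, HasDerivWithinAt f (f' x) (Ici a) x) (hanti : AntitoneOn f' (Ici a))
    (hab : a ≤ b) (hslope : f' b < 0) :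
    ∃ t ≥ b, f t ≤ 0 := by
  have hstep : 0 ≤ |f b| / -f' b := div_nonneg (abs_nonneg _) (by linarith)
  refine ⟨b + |f b| / -f' b, by linarith, ?_⟩
  have htangent := le_add_mul_sub_of_hasDerivWithinAt_of_antitoneOn hder hanti hab
    (le_add_of_nonneg_right hstep)
  have hcancel : f' b * (|f b| / -f' b) = -|f b| := by
    rw [mul_div_assoc', div_neg, mul_div_cancel_left₀ _ hslope.ne]
  rw [add_sub_cancel_left, hcancel] at htangent
  linarith [le_abs_self (f b)]

theorem stmt1_general (K f f' f'' : ℝ → ℝ)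
    (hder1 : ∀ t ∈ Ici (0:ℝ), HasDerivWithinAt f (f' t) (Ici 0) t)
    (hder2 : ∀ t ∈ Ici (0:ℝ), HasDerivWithinAt f' (f'' t) (Ici 0) t)
    (hode : ∀ t ∈ Ici (0:ℝ), f'' t + K t * f t = 0)
    (hf'0 : f' 0 = 0)
    (hne : ∀ t > (0:ℝ), f' t ≠ 0)
    (hfpos : ∀ t ∈ Ici (0:ℝ), 0 < f t) :
    ∃ t > (0:ℝ), K t < 0 := by
  by_contra! hK
  have hf''_nonpos : ∀ t > (0:ℝ), f'' t ≤ 0 := fun t ht => by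
    nlinarith [hode t ht.le, hK t ht, hfpos t ht.le]
  have hf'_anti := antitoneOn_Ici_of_hasDerivWithinAt_nonpos hder2 hf''_nonpos
  have hf'1 : f' 1 < 0 :=
    ((hf'_anti self_mem_Ici (mem_Ici.2 zero_le_one) zero_le_one).trans_eq hf'0).lt_of_ne
      (hne 1 one_pos)
  obtain ⟨t, ht, hft⟩ := exists_nonpos_of_hasDerivWithinAt_of_antitoneOn hder1 hf'_anti
    zero_le_one hf'1
  exact (hfpos t (zero_le_one.trans ht)).not_ge hft

/-- With `f` a C² solution of `f'' + K⬝f = 0` on `[0,∞)`, `f 0 = c > 0`,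
`f' 0 = 0`, `K 0 > 0`, `f' t ≠ 0` for all `t > 0`, and `f > 0` on `[0,∞)`, there exists
`t > 0` with `K t < 0`. -/
theorem stmt1 (c : ℝ) (hc : 0 < c) (K f f' f'' : ℝ → ℝ)
    (hKcont : ContinuousOn K (Ici 0))
    (hder1 : ∀ t ∈ Ici (0:ℝ), HasDerivWithinAt f (f' t) (Ici 0) t)
    (hder2 : ∀ t ∈ Ici (0:ℝ), HasDerivWithinAt f' (f'' t) (Ici 0) t)
    (hf''cont : ContinuousOn f'' (Ici 0))
    (hode : ∀ t ∈ Ici (0:ℝ), f'' t + K t * f t = 0)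
    (hf0 : f 0 = c) (hf'0 : f' 0 = 0)
    (hK0 : 0 < K 0)
    (hne : ∀ t > (0:ℝ), f' t ≠ 0)
    (hfpos : ∀ t ∈ Ici (0:ℝ), 0 < f t) :
    ∃ t > (0:ℝ), K t < 0 :=
  stmt1_general K f f' f'' hder1 hder2 hode hf'0 hne hfpos
end

section
/- Let c > 0, let K : [0,∞) → ℝ be continuous and monotone decreasing, and let f solve f'' + K·f = 0 on [0,∞) with f(0) = c and f'(0) = 0. Suppose K(0) > 0, f(t) > 0 for all t ∈ [0,∞), and f'(t) = 0 for some t > 0. Then there exists a unique t₀ ∈ (0,∞) with f'(t₀) = 0, and moreover f'(t) < 0 on (0, t₀) and f'(t) > 0 on (t₀, ∞). -/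
/-!
At a positive zero `t` of `f'` we must have `K t < 0`: otherwise `K ≥ 0` on `[0, t]`, so
`f'' = -K f ≤ 0` there and `f'` is antitone on `[0, t]`; as `f' 0 = f' t = 0`, `f'` vanishes on
`[0, t]`, forcing `f'' 0 = 0`, whereas `f'' 0 = -K 0 * f 0 < 0`. Since `K` is decreasing, `K < 0`
and hence `f'' > 0` from `t` on, so `f'` is strictly increasing on `[t, ∞)`. Thus `f'` has at most
one positive zero `t₀` and is positive after it. Before it, a point `s` with `K s ≥ 0` has
`f' s ≤ f' 0 = 0`, and one with `K s < 0` has `f' s < f' t₀ = 0`.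
-/

open Set

namespace Jacobi

variable {K f f' f'' : ℝ → ℝ}

lemma hasDerivWithinAt_interior_of_subset_Ici {D : Set ℝ} (hD : D ⊆ Ici 0)
    (hder2 : ∀ t ∈ Ici (0:ℝ), HasDerivWithinAt f' (f'' t) (Ici 0) t) :
    ∀ x ∈ interior D, HasDerivWithinAt f' (f'' x) (interior D) x := fun x hx =>
  (hder2 x (hD (interior_subset hx))).mono (interior_subset.trans hD)

lemma antitoneOn_Icc_of_coeff_nonneg {b : ℝ} (hKdec : AntitoneOn K (Ici 0))
    (hder2 : ∀ t ∈ Ici (0:ℝ), HasDerivWithinAt f' (f'' t) (Ici 0) t)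
    (hode : ∀ t ∈ Ici (0:ℝ), f'' t + K t * f t = 0)
    (hfpos : ∀ t ∈ Ici (0:ℝ), 0 < f t) (hKb : 0 ≤ K b) :
    AntitoneOn f' (Icc 0 b) := by
  refine antitoneOn_of_hasDerivWithinAt_nonpos (convex_Icc 0 b)
    (fun t ht => (hder2 t ht.1).continuousWithinAt.mono Icc_subset_Ici_self)
    (hasDerivWithinAt_interior_of_subset_Ici Icc_subset_Ici_self hder2) fun x hx => ?_
  rw [interior_Icc] at hx
  have hx0 : x ∈ Ici (0:ℝ) := hx.1.le
  have hKx : 0 ≤ K x := hKb.trans (hKdec hx0 (hx.1.trans hx.2).le hx.2.le)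
  nlinarith [hode x hx0, hfpos x hx0]

lemma strictMonoOn_Ici_of_coeff_neg {a : ℝ} (ha : 0 ≤ a) (hKdec : AntitoneOn K (Ici 0))
    (hder2 : ∀ t ∈ Ici (0:ℝ), HasDerivWithinAt f' (f'' t) (Ici 0) t)
    (hode : ∀ t ∈ Ici (0:ℝ), f'' t + K t * f t = 0)
    (hfpos : ∀ t ∈ Ici (0:ℝ), 0 < f t) (hKa : K a < 0) :
    StrictMonoOn f' (Ici a) := by
  have hsub : Ici a ⊆ Ici 0 := Ici_subset_Ici.2 ha
  refine strictMonoOn_of_hasDerivWithinAt_pos (convex_Ici a)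
    (fun t ht => (hder2 t (hsub ht)).continuousWithinAt.mono hsub)
    (hasDerivWithinAt_interior_of_subset_Ici hsub hder2) fun x hx => ?_
  rw [interior_Ici] at hx
  have hx0 : x ∈ Ici (0:ℝ) := ha.trans hx.le
  have hKx : K x < 0 := (hKdec ha hx0 hx.le).trans_lt hKa
  nlinarith [hode x hx0, hfpos x hx0]

lemma coeff_neg_of_deriv_eq_zero {t : ℝ} (ht : 0 < t) (hKdec : AntitoneOn K (Ici 0))
    (hder2 : ∀ t ∈ Ici (0:ℝ), HasDerivWithinAt f' (f'' t) (Ici 0) t)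
    (hode : ∀ t ∈ Ici (0:ℝ), f'' t + K t * f t = 0) (hf'0 : f' 0 = 0) (hK0 : 0 < K 0)
    (hfpos : ∀ t ∈ Ici (0:ℝ), 0 < f t) (hf't : f' t = 0) :
    K t < 0 := by
  by_contra! hKt
  have hanti := antitoneOn_Icc_of_coeff_nonneg hKdec hder2 hode hfpos hKt
  have hflat : EqOn f' (fun _ => 0) (Icc 0 t) := fun s hs => le_antisymm
    (hf'0 ▸ hanti (left_mem_Icc.2 ht.le) hs hs.1)
    (hf't ▸ hanti hs (right_mem_Icc.2 ht.le) hs.2)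
  have hderiv_zero : HasDerivWithinAt f' 0 (Ici 0) 0 :=
    (hasDerivWithinAt_const 0 (Ici 0) (0:ℝ)).congr_of_eventuallyEq
      (Filter.mem_of_superset (Icc_mem_nhdsGE ht) hflat) hf'0
  have hf''0 : f'' 0 = 0 :=
    (uniqueDiffWithinAt_Ici 0).eq_deriv _ (hder2 0 self_mem_Ici) hderiv_zero
  nlinarith [hode 0 self_mem_Ici, hfpos 0 self_mem_Ici]

end Jacobi

open Jacobi

theorem stmt2_general (K f f' f'' : ℝ → ℝ)
    (hKdec : AntitoneOn K (Ici 0))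
    (hder2 : ∀ t ∈ Ici (0:ℝ), HasDerivWithinAt f' (f'' t) (Ici 0) t)
    (hode : ∀ t ∈ Ici (0:ℝ), f'' t + K t * f t = 0)
    (hf'0 : f' 0 = 0)
    (hK0 : 0 < K 0)
    (hfpos : ∀ t ∈ Ici (0:ℝ), 0 < f t)
    (hzero : ∃ t > (0:ℝ), f' t = 0) :
    ∃ t₀ > (0:ℝ), f' t₀ = 0 ∧ (∀ t > (0:ℝ), f' t = 0 → t = t₀) ∧
      (∀ t ∈ Ioo (0:ℝ) t₀, f' t < 0) ∧ (∀ t ∈ Ioi t₀, 0 < f' t) := by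
  have pos_after_zero : ∀ t₁ > (0:ℝ), f' t₁ = 0 → ∀ t > t₁, 0 < f' t := fun t₁ ht₁ hf't₁ t ht =>
    hf't₁ ▸ strictMonoOn_Ici_of_coeff_neg ht₁.le hKdec hder2 hode hfpos
      (coeff_neg_of_deriv_eq_zero ht₁ hKdec hder2 hode hf'0 hK0 hfpos hf't₁) self_mem_Ici ht.le ht
  obtain ⟨t₀, ht₀, hf't₀⟩ := hzero
  have neg_before : ∀ t ∈ Ioo (0:ℝ) t₀, f' t < 0 := by
    intro t ⟨ht, htt₀⟩
    rcases le_or_gt 0 (K t) with hKt | hKt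
    · refine (hf'0 ▸ antitoneOn_Icc_of_coeff_nonneg hKdec hder2 hode hfpos hKt
        (left_mem_Icc.2 ht.le) (right_mem_Icc.2 ht.le) ht.le).lt_of_ne fun hf't => ?_
      exact (pos_after_zero t ht hf't t₀ htt₀).ne' hf't₀
    · exact hf't₀ ▸ strictMonoOn_Ici_of_coeff_neg ht.le hKdec hder2 hode hfpos hKt
        self_mem_Ici htt₀.le htt₀
  refine ⟨t₀, ht₀, hf't₀, fun t ht hf't => ?_, neg_before, pos_after_zero t₀ ht₀ hf't₀⟩
  rcases lt_trichotomy t t₀ with h | h | h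
  · exact absurd hf't (neg_before t ⟨ht, h⟩).ne
  · exact h
  · exact absurd hf't (pos_after_zero t₀ ht₀ hf't₀ t h).ne'

/-- With `K` continuous and decreasing on `[0,∞)`, `f` a C² solution of
`f'' + K⬝f = 0` with `f 0 = c > 0`, `f' 0 = 0`, `K 0 > 0`, `f > 0` on `[0,∞)` and
`f' t = 0` for some `t > 0`, there is a unique `t₀ ∈ (0,∞)` with `f' t₀ = 0`; moreover
`f' < 0` on `(0,t₀)` and `f' > 0` on `(t₀,∞)`. -/
theorem stmt2 (c : ℝ) (hc : 0 < c) (K f f' f'' : ℝ → ℝ)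
    (hKcont : ContinuousOn K (Ici 0))
    (hKdec : AntitoneOn K (Ici 0))
    (hder1 : ∀ t ∈ Ici (0:ℝ), HasDerivWithinAt f (f' t) (Ici 0) t)
    (hder2 : ∀ t ∈ Ici (0:ℝ), HasDerivWithinAt f' (f'' t) (Ici 0) t)
    (hf''cont : ContinuousOn f'' (Ici 0))
    (hode : ∀ t ∈ Ici (0:ℝ), f'' t + K t * f t = 0)
    (hf0 : f 0 = c) (hf'0 : f' 0 = 0)
    (hK0 : 0 < K 0)
    (hfpos : ∀ t ∈ Ici (0:ℝ), 0 < f t)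
    (hzero : ∃ t > (0:ℝ), f' t = 0) :
    ∃ t₀ > (0:ℝ), f' t₀ = 0 ∧ (∀ t > (0:ℝ), f' t = 0 → t = t₀) ∧
      (∀ t ∈ Ioo (0:ℝ) t₀, f' t < 0) ∧ (∀ t ∈ Ioi t₀, 0 < f' t) :=
  stmt2_general K f f' f'' hKdec hder2 hode hf'0 hK0 hfpos hzero
end

section
/- Let c > 0, let K : [0,∞) → ℝ be continuous and monotone decreasing, and let f solve f'' + K·f = 0 on [0,∞) with f(0) = c and f'(0) = 0. Suppose K(0) > 0, f(t) > 0 for all t ∈ [0,∞), and f'(t₀) = 0 for some t₀ > 0 which is the unique positive zero of f'. Then there exists t₁ ∈ (0, t₀) with K(t₁) = 0, and consequently K ≥ 0 on [0, t₁] and K ≤ 0 on [t₁, ∞). -/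
open Set

/-- With `K` continuous and decreasing on `[0,∞)`, `f` a C² solution of
`f'' + K⬝f = 0` with `f 0 = c > 0`, `f' 0 = 0`, `K 0 > 0`, `f > 0` on `[0,∞)`, and `t₀ > 0`
the unique positive zero of `f'`, there exists `t₁ ∈ (0,t₀)` with `K t₁ = 0`, and
consequently `K ≥ 0` on `[0,t₁]` and `K ≤ 0` on `[t₁,∞)`. -/
theorem stmt3 (c : ℝ) (hc : 0 < c) (K f f' f'' : ℝ → ℝ)
    (hKcont : ContinuousOn K (Ici 0))
    (hKdec : AntitoneOn K (Ici 0))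
    (hder1 : ∀ t ∈ Ici (0:ℝ), HasDerivWithinAt f (f' t) (Ici 0) t)
    (hder2 : ∀ t ∈ Ici (0:ℝ), HasDerivWithinAt f' (f'' t) (Ici 0) t)
    (hf''cont : ContinuousOn f'' (Ici 0))
    (hode : ∀ t ∈ Ici (0:ℝ), f'' t + K t * f t = 0)
    (hf0 : f 0 = c) (hf'0 : f' 0 = 0)
    (hK0 : 0 < K 0)
    (hfpos : ∀ t ∈ Ici (0:ℝ), 0 < f t)
    (t₀ : ℝ) (ht₀pos : 0 < t₀) (ht₀ : f' t₀ = 0)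
    (huniq : ∀ t > (0:ℝ), f' t = 0 → t = t₀) :
    ∃ t₁ ∈ Ioo (0:ℝ) t₀, K t₁ = 0 ∧ (∀ t ∈ Icc (0:ℝ) t₁, 0 ≤ K t) ∧
      (∀ t ∈ Ici t₁, K t ≤ 0) := by
  -- Step 1: there exists s ∈ (0, t₀) with K s ≤ 0
  have hstep : ∃ s ∈ Ioo (0:ℝ) t₀, K s ≤ 0 := by
    by_contra h
    push_neg at h
    -- then K > 0 on (0,t₀), hence f'' < 0 there, f' strictly decreasing on [0,t₀]
    have hsub : Icc (0:ℝ) t₀ ⊆ Ici 0 := fun x hx => hx.1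
    have hanti : StrictAntiOn f' (Icc (0:ℝ) t₀) := by
      apply strictAntiOn_of_hasDerivWithinAt_neg (f' := f'') (convex_Icc 0 t₀)
      · exact fun x hx => ((hder2 x (hsub hx)).continuousWithinAt).mono hsub
      · intro x hx
        rw [interior_Icc] at hx ⊢
        exact (hder2 x (le_of_lt hx.1)).mono (fun y hy => le_of_lt hy.1)
      · intro x hx
        rw [interior_Icc] at hx
        have hx0 : x ∈ Ici (0:ℝ) := le_of_lt hx.1
        have := hode x hx0
        have hK : 0 < K x := h x hx
        nlinarith [hfpos x hx0]
    have := hanti (left_mem_Icc.2 ht₀pos.le) (right_mem_Icc.2 ht₀pos.le) ht₀pos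
    rw [hf'0, ht₀] at this
    exact lt_irrefl 0 this
  obtain ⟨s, hs, hKs⟩ := hstep
  -- Step 2: IVT gives a zero of K on [0, s]
  have hIVT : ∃ t₁ ∈ Icc (0:ℝ) s, K t₁ = 0 := by
    have hsub : Icc (0:ℝ) s ⊆ Ici 0 := fun x hx => hx.1
    have := intermediate_value_Icc' (le_of_lt hs.1) (hKcont.mono hsub)
    exact (this ⟨hKs, hK0.le⟩).imp (fun x hx => ⟨hx.1, hx.2⟩)
  obtain ⟨t₁, ht₁, hKt₁⟩ := hIVT
  have ht₁pos : 0 < t₁ := by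
    rcases ht₁.1.lt_or_eq with h | h
    · exact h
    · exfalso; rw [← h] at hKt₁; linarith
  refine ⟨t₁, ⟨ht₁pos, lt_of_le_of_lt ht₁.2 hs.2⟩, hKt₁, ?_, ?_⟩
  · intro t ht
    have := hKdec ht.1 (le_trans ht.1 ht.2) ht.2
    · rw [hKt₁] at this; exact this
  · intro t ht
    have := hKdec (le_trans ht₁.1 (le_refl t₁) : (0:ℝ) ≤ t₁) (le_trans ht₁.1 ht) ht
    rw [hKt₁] at this; exact this
end

section
/- Let q be a point of M̃ on the meridian θ = 0 and let u₀ be any real number. Then the function θ ↦ d(q, (u₀, θ)) is strictly increasing on [0, ∞). -/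
open Real Set

noncomputable section

/-- Length of a C¹ curve `c` on `[a,b]` in the warped product metric
`ds² = dt² + m(t)² dθ²` on `M̃ = ℝ²` (coordinates `(t,θ)`). -/
def wLength (m : ℝ → ℝ) (c : ℝ → ℝ × ℝ) (a b : ℝ) : ℝ :=
  ∫ s in a..b,
    Real.sqrt ((deriv (fun u => (c u).1) s) ^ 2 +
      (m (c s).1) ^ 2 * (deriv (fun u => (c u).2) s) ^ 2)

/-- The Riemannian distance on `M̃`: the infimum of lengths of C¹ curves joining `p` to `q`. -/
def wDist (m : ℝ → ℝ) (p q : ℝ × ℝ) : ℝ :=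
  sInf {L : ℝ | ∃ c : ℝ → ℝ × ℝ, ∃ b : ℝ, 0 ≤ b ∧ ContDiff ℝ 1 c ∧
    c 0 = p ∧ c b = q ∧ L = wLength m c 0 b}

/-- `γ = (t(s), θ(s))` is a unit-speed geodesic of the warped product metric:
`t'' = m(t) m'(t) θ'²`, `m(t)² θ'` is constant, and `t'² + m(t)² θ'² = 1`. -/
def IsUnitGeodesic (m : ℝ → ℝ) (γ : ℝ → ℝ × ℝ) : Prop :=
  ContDiff ℝ 2 γ ∧
  (∀ s, deriv (deriv fun u => (γ u).1) s =
      m (γ s).1 * deriv m (γ s).1 * (deriv (fun u => (γ u).2) s) ^ 2) ∧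
  (∃ ν : ℝ, ∀ s, m (γ s).1 ^ 2 * deriv (fun u => (γ u).2) s = ν) ∧
  (∀ s, (deriv (fun u => (γ u).1) s) ^ 2 +
      m (γ s).1 ^ 2 * (deriv (fun u => (γ u).2) s) ^ 2 = 1)

/-- `ν` is the Clairaut constant of the geodesic `γ`: `m(t(s))² θ'(s) = ν` for all `s`. -/
def HasClairaut (m : ℝ → ℝ) (γ : ℝ → ℝ × ℝ) (ν : ℝ) : Prop :=
  ∀ s, m (γ s).1 ^ 2 * deriv (fun u => (γ u).2) s = ν

/-- The (unit-speed) geodesic segment `γ|[0,a]` is minimal: its length `a` equals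
the distance between its endpoints. -/
def IsMinimalSeg (m : ℝ → ℝ) (γ : ℝ → ℝ × ℝ) (a : ℝ) : Prop :=
  wDist m (γ 0) (γ a) = a

/-- `x` is a cut point of `p`: the endpoint of some minimal geodesic segment from `p`
no extension of which is minimal. -/
def IsCutPoint (m : ℝ → ℝ) (p x : ℝ × ℝ) : Prop :=
  ∃ γ : ℝ → ℝ × ℝ, ∃ a : ℝ, IsUnitGeodesic m γ ∧ γ 0 = p ∧ 0 < a ∧ γ a = x ∧
    IsMinimalSeg m γ a ∧ ∀ ε > 0, ¬ IsMinimalSeg m γ (a + ε)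

/-- The cut locus of `p` in `M̃`. -/
def cutLocus (m : ℝ → ℝ) (p : ℝ × ℝ) : Set (ℝ × ℝ) := {x | IsCutPoint m p x}

/-- The Gaussian curvature `K(t) = -m''(t)/m(t)` of the warped product metric. -/
def gaussK (m : ℝ → ℝ) (t : ℝ) : ℝ := -(deriv (deriv m) t) / m t

/-- `ξ(ν) := min {t > 0 | m t = ν}`. -/
def xi (m : ℝ → ℝ) (ν : ℝ) : ℝ := sInf {t : ℝ | 0 < t ∧ m t = ν}

/-- `φ(ν) := 2∫₀^{ξ(ν)} ν / (m(t) √(m(t)² - ν²)) dt`. -/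
def phi (m : ℝ → ℝ) (ν : ℝ) : ℝ :=
  2 * ∫ t in (0:ℝ)..(xi m ν), ν / (m t * Real.sqrt ((m t) ^ 2 - ν ^ 2))

/-- `l(ν) := 2∫_{-ξ(ν)}^{0} m(t) / √(m(t)² - ν²) dt`. -/
def ell (m : ℝ → ℝ) (ν : ℝ) : ℝ :=
  2 * ∫ t in (-(xi m ν))..(0:ℝ), m t / Real.sqrt ((m t) ^ 2 - ν ^ 2)

/-- `inf m`. -/
def infm (m : ℝ → ℝ) : ℝ := ⨅ t : ℝ, m t

/-- `t₀ := sup {t > 0 | m'(t) < 0}`. -/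
def tZero (m : ℝ → ℝ) : ℝ := sSup {t : ℝ | 0 < t ∧ deriv m t < 0}

/-!
Shrinking the `θ`-coordinate of a curve by the factor `r = θ₁ / θ₂ < 1` turns a curve from `q`
to `(u₀, θ₂)` into one from `q` to `(u₀, θ₁)`, and replaces its length element `√(t'² + B²)`,
`B = m(t) |θ'|`, by `√(t'² + r² B²)`. Curves of length at most `d(q, (u₀, θ₂)) + 1` stay in a
compact range of `t` on which `m ≥ μ > 0`, so `∫ B ≥ μ θ₂`; the tangent-line bound
`B² / S ≥ 2 k B - k² S` then makes the saving in length at least a `δ > 0` independent of the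
curve, whence `d(q, (u₀, θ₁)) ≤ d(q, (u₀, θ₂)) - δ`.
-/

def wSpeed (m : ℝ → ℝ) (c : ℝ → ℝ × ℝ) (s : ℝ) : ℝ :=
  √(deriv (fun u => (c u).1) s ^ 2 + m (c s).1 ^ 2 * deriv (fun u => (c u).2) s ^ 2)

def curveLengths (m : ℝ → ℝ) (p x : ℝ × ℝ) : Set ℝ :=
  {L : ℝ | ∃ c : ℝ → ℝ × ℝ, ∃ b : ℝ, 0 ≤ b ∧ ContDiff ℝ 1 c ∧
    c 0 = p ∧ c b = x ∧ L = wLength m c 0 b}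

/-- With `S = √(x² + B²)` and `c = 1 - r²`: `√(S² - c B²) ≤ S - c B² / (2 S)` by concavity,
and `B² / S ≥ 2 k B - k² S`. -/
lemma sqrt_add_mul_sq_le {x B r k : ℝ} (hB : 0 ≤ B) (hr : r ^ 2 ≤ 1) (hk : 0 ≤ k) :
    √(x ^ 2 + r ^ 2 * B ^ 2) ≤
      (1 + (1 - r ^ 2) * k ^ 2 / 2) * √(x ^ 2 + B ^ 2) - (1 - r ^ 2) * k * B := by
  set c := 1 - r ^ 2
  have hc : 0 ≤ c := by linarith
  set S := √(x ^ 2 + B ^ 2)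
  have hS : S ^ 2 = x ^ 2 + B ^ 2 := sq_sqrt (by positivity)
  have hBS : B ≤ S := le_sqrt_of_sq_le (by nlinarith)
  have hR : 0 ≤ (1 + c * k ^ 2 / 2) * S - c * k * B := by
    nlinarith [mul_nonneg (mul_nonneg hc (hB.trans hBS)) (sq_nonneg (k - 1)),
      mul_nonneg (mul_nonneg hc hk) (sub_nonneg.2 hBS)]
  refine sqrt_le_iff.2 ⟨hR, ?_⟩
  nlinarith [mul_nonneg hc (sq_nonneg (k * S - B)),
    mul_nonneg (mul_nonneg (mul_nonneg hc hc) (sq_nonneg k)) (sq_nonneg (k * S / 2 - B))]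

section Curves

variable {m : ℝ → ℝ} {c : ℝ → ℝ × ℝ} {a b : ℝ}

lemma wLength_eq_integral_wSpeed : wLength m c a b = ∫ s in a..b, wSpeed m c s := rfl

lemma wLength_nonneg (hab : a ≤ b) : 0 ≤ wLength m c a b :=
  intervalIntegral.integral_nonneg hab fun _ _ => sqrt_nonneg _

lemma continuous_wSpeed (hm : Continuous m) (hc : ContDiff ℝ 1 c) : Continuous (wSpeed m c) :=
  (((contDiff_fst.comp hc).continuous_deriv le_rfl).pow 2).add
    (((hm.comp (continuous_fst.comp hc.continuous)).pow 2).mul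
      (((contDiff_snd.comp hc).continuous_deriv le_rfl).pow 2)) |>.sqrt

lemma abs_fst_sub_le_wLength (hm : Continuous m) (hc : ContDiff ℝ 1 c) {s : ℝ}
    (hs : s ∈ Icc a b) : |(c s).1 - (c a).1| ≤ wLength m c a b := by
  have hc₁ : ContDiff ℝ 1 fun u => (c u).1 := contDiff_fst.comp hc
  have hcont := hc₁.continuous_deriv le_rfl
  calc |(c s).1 - (c a).1|
      = |∫ u in a..s, deriv (fun u => (c u).1) u| := by
        rw [intervalIntegral.integral_deriv_eq_sub (fun x _ => hc₁.differentiable one_ne_zero x)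
          (hcont.intervalIntegrable _ _)]
    _ ≤ ∫ u in a..s, |deriv (fun u => (c u).1) u| :=
        intervalIntegral.abs_integral_le_integral_abs hs.1
    _ ≤ ∫ u in a..s, wSpeed m c u := by
        refine intervalIntegral.integral_mono_on hs.1 (hcont.abs.intervalIntegrable _ _)
          ((continuous_wSpeed hm hc).intervalIntegrable _ _) fun u _ => ?_
        rw [← sqrt_sq_eq_abs]
        exact sqrt_le_sqrt (le_add_of_nonneg_right (by positivity))
    _ ≤ ∫ u in a..b, wSpeed m c u :=
        intervalIntegral.integral_mono_interval le_rfl hs.1 hs.2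
          (.of_forall fun _ => sqrt_nonneg _) ((continuous_wSpeed hm hc).intervalIntegrable _ _)

lemma mul_abs_snd_sub_le_integral (hm : Continuous m) (hc : ContDiff ℝ 1 c) (hab : a ≤ b)
    {μ : ℝ} (hμ : 0 ≤ μ) (hμm : ∀ s ∈ Icc a b, μ ≤ m (c s).1) :
    μ * |(c b).2 - (c a).2| ≤ ∫ s in a..b, |m (c s).1 * deriv (fun u => (c u).2) s| := by
  have hc₂ : ContDiff ℝ 1 fun u => (c u).2 := contDiff_snd.comp hc
  have hcont := hc₂.continuous_deriv le_rfl
  calc μ * |(c b).2 - (c a).2|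
      = μ * |∫ u in a..b, deriv (fun u => (c u).2) u| := by
        rw [intervalIntegral.integral_deriv_eq_sub (fun x _ => hc₂.differentiable one_ne_zero x)
          (hcont.intervalIntegrable _ _)]
    _ ≤ μ * ∫ u in a..b, |deriv (fun u => (c u).2) u| :=
        mul_le_mul_of_nonneg_left (intervalIntegral.abs_integral_le_integral_abs hab) hμ
    _ = ∫ u in a..b, μ * |deriv (fun u => (c u).2) u| :=
        (intervalIntegral.integral_const_mul _ _).symm
    _ ≤ _ :=
        intervalIntegral.integral_mono_on hab
          ((continuous_const.mul hcont.abs).intervalIntegrable _ _)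
          (((hm.comp (continuous_fst.comp hc.continuous)).mul hcont).abs.intervalIntegrable _ _)
          fun s hs => by
            show μ * _ ≤ |m (c s).1 * _|
            rw [abs_mul]
            exact mul_le_mul_of_nonneg_right ((hμm s hs).trans (le_abs_self _)) (abs_nonneg _)

lemma wLength_scale_snd_le (hm : Continuous m) (hc : ContDiff ℝ 1 c) (hab : a ≤ b) {r k : ℝ}
    (hr : r ^ 2 ≤ 1) (hk : 0 ≤ k) :
    wLength m (fun s => ((c s).1, r * (c s).2)) a b ≤
      (1 + (1 - r ^ 2) * k ^ 2 / 2) * wLength m c a b -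
        (1 - r ^ 2) * k * ∫ s in a..b, |m (c s).1 * deriv (fun u => (c u).2) s| := by
  have hc₂ : ContDiff ℝ 1 fun u => (c u).2 := contDiff_snd.comp hc
  have hB : Continuous fun s => |m (c s).1 * deriv (fun u => (c u).2) s| :=
    ((hm.comp (continuous_fst.comp hc.continuous)).mul (hc₂.continuous_deriv le_rfl)).abs
  have hcr : ContDiff ℝ 1 fun s => ((c s).1, r * (c s).2) :=
    (contDiff_fst.comp hc).prodMk (contDiff_const.mul hc₂)
  have hS : IntervalIntegrable (fun s => (1 + (1 - r ^ 2) * k ^ 2 / 2) * wSpeed m c s)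
      MeasureTheory.volume a b :=
    (continuous_const.mul (continuous_wSpeed hm hc)).intervalIntegrable _ _
  have hB' : IntervalIntegrable
      (fun s => (1 - r ^ 2) * k * |m (c s).1 * deriv (fun u => (c u).2) s|)
      MeasureTheory.volume a b :=
    (continuous_const.mul hB).intervalIntegrable _ _
  rw [wLength_eq_integral_wSpeed, wLength_eq_integral_wSpeed,
    ← intervalIntegral.integral_const_mul, ← intervalIntegral.integral_const_mul,
    ← intervalIntegral.integral_sub hS hB']
  refine intervalIntegral.integral_mono_on hab ((continuous_wSpeed hm hcr).intervalIntegrable _ _)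
    (hS.sub hB') fun s _ => ?_
  have hderiv : deriv (fun u => r * (c u).2) s = r * deriv (fun u => (c u).2) s :=
    deriv_const_mul r (hc₂.differentiable one_ne_zero s)
  have h := sqrt_add_mul_sq_le (x := deriv (fun u => (c u).1) s)
    (abs_nonneg (m (c s).1 * deriv (fun u => (c u).2) s)) hr hk
  simp only [wSpeed, hderiv]
  rw [sq_abs, mul_pow] at h
  convert h using 3
  ring

end Curves

section Distance

variable {m : ℝ → ℝ} {p x : ℝ × ℝ}

lemma wDist_eq_sInf_curveLengths : wDist m p x = sInf (curveLengths m p x) := rfl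

lemma curveLengths_bddBelow : BddBelow (curveLengths m p x) :=
  ⟨0, by rintro L ⟨c, b, hb, -, -, -, rfl⟩; exact wLength_nonneg hb⟩

lemma curveLengths_nonempty : (curveLengths m p x).Nonempty := by
  refine ⟨_, fun s => (p.1 + s * (x.1 - p.1), p.2 + s * (x.2 - p.2)), 1, zero_le_one,
    ?_, ?_, ?_, rfl⟩
  · fun_prop
  · simp
  · simp

lemma wDist_nonneg : 0 ≤ wDist m p x :=
  le_csInf curveLengths_nonempty fun _ ⟨_, _, hb, _, _, _, hL⟩ => hL ▸ wLength_nonneg hb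

lemma wDist_le_wLength {c : ℝ → ℝ × ℝ} {b : ℝ} (hb : 0 ≤ b) (hc : ContDiff ℝ 1 c)
    (h0 : c 0 = p) (hb' : c b = x) : wDist m p x ≤ wLength m c 0 b :=
  csInf_le curveLengths_bddBelow ⟨c, b, hb, hc, h0, hb', rfl⟩

lemma le_wDist_sub {a δ : ℝ}
    (h : ∀ c b, 0 ≤ b → ContDiff ℝ 1 c → c 0 = p → c b = x →
      wLength m c 0 b ≤ wDist m p x + 1 → a ≤ wLength m c 0 b - δ) :
    a ≤ wDist m p x - δ := by
  refine le_of_forall_pos_lt_add fun ε hε => ?_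
  obtain ⟨L, ⟨c, b, hb, hc, h0, hb', rfl⟩, hL⟩ :=
    Real.lt_sInf_add_pos curveLengths_nonempty (lt_min hε one_pos)
  have := h c b hb hc h0 hb' (by rw [wDist_eq_sInf_curveLengths]; linarith [min_le_right ε 1])
  rw [wDist_eq_sInf_curveLengths]
  linarith [min_le_left ε 1]

lemma wDist_scale_snd_le {c : ℝ → ℝ × ℝ} {b R μ r : ℝ} (hm : Continuous m)
    (hc : ContDiff ℝ 1 c) (hb : 0 ≤ b) (h0 : c 0 = p) (hp : p.2 = 0) (hR : 0 < R)
    (hLR : wLength m c 0 b ≤ R) (hμ : 0 ≤ μ) (hμm : ∀ t ∈ Icc (p.1 - R) (p.1 + R), μ ≤ m t)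
    (hr : r ^ 2 ≤ 1) :
    wDist m p ((c b).1, r * (c b).2) ≤
      wLength m c 0 b - (1 - r ^ 2) * (μ * (c b).2) ^ 2 / (2 * R) := by
  set L := wLength m c 0 b
  set I := ∫ s in (0 : ℝ)..b, |m (c s).1 * deriv (fun u => (c u).2) s|
  have hrange : ∀ s ∈ Icc 0 b, μ ≤ m (c s).1 := fun s hs => by
    have := abs_le.1 ((h0 ▸ abs_fst_sub_le_wLength hm hc hs).trans hLR)
    exact hμm _ ⟨by linarith, by linarith⟩
  have hI : μ * |(c b).2| ≤ I := by
    simpa only [h0, hp, sub_zero] using mul_abs_snd_sub_le_integral hm hc hb hμ hrange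
  -- the `k` that optimizes the bound below when `L = R`
  set k := μ * |(c b).2| / R
  have hk : 0 ≤ k := by positivity
  have hkR : k * R = μ * |(c b).2| := div_mul_cancel₀ _ hR.ne'
  have hδ : (1 - r ^ 2) * (μ * (c b).2) ^ 2 / (2 * R) = (1 - r ^ 2) * k ^ 2 * R / 2 := by
    rw [show (μ * (c b).2) ^ 2 = (k * R) ^ 2 by rw [hkR, mul_pow, mul_pow, sq_abs]]
    field_simp
  have hc₀ : 0 ≤ 1 - r ^ 2 := by linarith
  have hscaled : ContDiff ℝ 1 fun s => ((c s).1, r * (c s).2) :=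
    (contDiff_fst.comp hc).prodMk (contDiff_const.mul (contDiff_snd.comp hc))
  calc wDist m p ((c b).1, r * (c b).2)
      ≤ wLength m (fun s => ((c s).1, r * (c s).2)) 0 b :=
        wDist_le_wLength hb hscaled (Prod.ext (by rw [h0]) (by simp [h0, hp])) rfl
    _ ≤ (1 + (1 - r ^ 2) * k ^ 2 / 2) * L - (1 - r ^ 2) * k * I :=
        wLength_scale_snd_le hm hc hb hr hk
    _ ≤ L - (1 - r ^ 2) * (μ * (c b).2) ^ 2 / (2 * R) := by
        rw [hδ]
        nlinarith [mul_nonneg (mul_nonneg hc₀ hk) (sub_nonneg.2 (hkR ▸ hI : k * R ≤ I)),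
          mul_nonneg (mul_nonneg hc₀ (sq_nonneg k)) (sub_nonneg.2 hLR)]

end Distance

theorem stmt9_general (m : ℝ → ℝ) (hm : ContDiff ℝ (⊤:ℕ∞) m) (hmpos : ∀ t, 0 < m t)
    (q : ℝ × ℝ) (hq : q.2 = 0) (u₀ : ℝ) :
    StrictMonoOn (fun θ : ℝ => wDist m q (u₀, θ)) (Ici 0) := by
  intro θ₁ hθ₁ θ₂ hθ₂ hlt
  have hθ₂pos : 0 < θ₂ := lt_of_le_of_lt hθ₁ hlt
  set R := wDist m q (u₀, θ₂) + 1
  have hR : 0 < R := by linarith [wDist_nonneg (m := m) (p := q) (x := (u₀, θ₂))]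
  obtain ⟨t, -, ht⟩ := (isCompact_Icc (a := q.1 - R) (b := q.1 + R)).exists_isMinOn
    (nonempty_Icc.2 (by linarith)) hm.continuous.continuousOn
  set r := θ₁ / θ₂
  have hr : r ^ 2 < 1 := by
    have : r < 1 := (div_lt_one hθ₂pos).2 hlt
    nlinarith [div_nonneg hθ₁ hθ₂pos.le]
  set δ := (1 - r ^ 2) * (m t * θ₂) ^ 2 / (2 * R)
  have hδ : 0 < δ :=
    div_pos (mul_pos (by linarith) (pow_pos (mul_pos (hmpos t) hθ₂pos) 2)) (by linarith)
  have hshorter : wDist m q (u₀, θ₁) ≤ wDist m q (u₀, θ₂) - δ :=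
    le_wDist_sub fun c b hb hc h0 hb' hL => by
      have := wDist_scale_snd_le hm.continuous hc hb h0 hq hR hL (hmpos t).le (fun _ hs => ht hs)
        hr.le
      simp only [hb'] at this
      rwa [div_mul_cancel₀ _ hθ₂pos.ne'] at this
  exact lt_of_le_of_lt hshorter (by linarith)

/-- for a point `q` on the meridian `θ = 0` and any real `u₀`, the function
`θ ↦ d(q, (u₀, θ))` is strictly increasing on `[0,∞)`. -/
theorem stmt9 (m : ℝ → ℝ) (hm : ContDiff ℝ (⊤:ℕ∞) m) (hmpos : ∀ t, 0 < m t)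
    (hmeven : ∀ t, m (-t) = m t)
    (q : ℝ × ℝ) (hq : q.2 = 0) (u₀ : ℝ) :
    StrictMonoOn (fun θ : ℝ => wDist m q (u₀, θ)) (Ici 0) :=
  stmt9_general m hm hmpos q hq u₀
end
end

section
/- Let q = (−u, 0) ∈ M̃ with 0 < u < t₀, let ν ∈ (inf m, m(u)), and let α_ν, β_ν, s₂, s₂⁺ be as follows: α_ν and β_ν are the unit-speed geodesics from q with Clairaut constant ν and t'(α_ν)(0) < 0 < t'(β_ν)(0), s₂ := min{s > 0 : t(α_ν(s)) = u}, s₁⁺ := min{s > 0 : t(β_ν(s)) = ξ(ν)}, s₂⁺ := min{s > s₁⁺ : t(β_ν(s)) = u}. Then the lengths of the segments α_ν|[0, s₂] and β_ν|[0, s₂⁺] are equal, and both equal l(ν) := 2∫_{−ξ(ν)}^{0} m(t)/√(m(t)² − ν²) dt; in particular s₂ = s₂⁺. -/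
open Real Set

noncomputable section

/-!
Along a unit-speed geodesic with Clairaut constant `ν` the coordinate `t` obeys
`m(t)² t'² = m(t)² - ν²`: it can only turn where `m(t) = ν`, and between turns
`ds = m(t) dt / √(m(t)² - ν²)`. Since `K` decreases and `m'(0) = 0`, `m' < 0` on `(0, t₀)`, so
`m > ν` on `(-ξ, ξ)` and `m'(ξ) < 0`; hence `m² - ν²` has simple zeros at `±ξ` and the density is
integrable there. The geodesic `α` runs from `-u` down to the turning point `-ξ` and back up to `u`,
and the mirror image `t ↦ -t` of `β` runs from `u` down to `-ξ` and back up to `-u`. Each covers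
`[-ξ, ξ]` exactly once, so both arrival times equal `∫_{-ξ}^{ξ} m / √(m² - ν²) = l(ν)`.
-/

open MeasureTheory intervalIntegral Filter Topology

namespace WarpedPlane

theorem exists_first_hit {g : ℝ → ℝ} (hg : Continuous g) {a b y : ℝ} (hab : a ≤ b)
    (ha : g a < y) (hb : y ≤ g b) : ∃ c ∈ Ioc a b, g c = y ∧ ∀ s ∈ Ico a c, g s < y := by
  set S := Icc a b ∩ {s | y ≤ g s}
  have hS : IsClosed S := isClosed_Icc.inter (isClosed_le continuous_const hg)
  have hSbdd : BddBelow S := ⟨a, fun s hs => hs.1.1⟩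
  have hc : sInf S ∈ S := hS.csInf_mem ⟨b, ⟨hab, le_rfl⟩, hb⟩ hSbdd
  have hbefore : ∀ s ∈ Ico a (sInf S), g s < y := fun s hs => by
    by_contra! h
    exact (csInf_le hSbdd ⟨⟨hs.1, hs.2.le.trans hc.1.2⟩, h⟩).not_gt hs.2
  have hac : a < sInf S := hc.1.1.lt_of_ne fun h => (h ▸ ha).not_ge hc.2
  obtain ⟨e, he, hge⟩ := intermediate_value_Icc hac.le hg.continuousOn ⟨ha.le, hc.2⟩
  have hec : e = sInf S := le_antisymm he.2 (csInf_le hSbdd ⟨⟨he.1, he.2.trans hc.1.2⟩, hge.ge⟩)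
  exact ⟨sInf S, ⟨hac, hc.1.2⟩, hec ▸ hge, hbefore⟩

theorem lt_of_mem_Ico_of_isLeast {g : ℝ → ℝ} (hg : Continuous g) {a b y : ℝ} (ha : g a < y)
    (hb : IsLeast {s | a < s ∧ g s = y} b) : ∀ s ∈ Ico a b, g s < y := by
  intro s hs
  by_contra! h
  obtain ⟨c, hc, hgc, -⟩ := exists_first_hit hg hs.1 ha h
  exact (hb.2 ⟨hc.1, hgc⟩).not_gt (hc.2.trans_lt hs.2)

theorem eventually_pos_right_of_deriv_pos {f : ℝ → ℝ} {x₀ : ℝ} (hf : 0 < deriv f x₀)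
    (h₀ : f x₀ = 0) : ∀ᶠ x in 𝓝[>] x₀, 0 < f x := by
  filter_upwards [nhdsWithin_le_nhds (eventually_nhdsWithin_sign_eq_of_deriv_pos hf h₀),
    self_mem_nhdsWithin] with x hx (hx₀ : x₀ < x)
  rwa [sign_pos (sub_pos.2 hx₀), sign_eq_one_iff] at hx

theorem eventually_pos_left_of_deriv_neg {f : ℝ → ℝ} {x₀ : ℝ} (hf : deriv f x₀ < 0)
    (h₀ : f x₀ = 0) : ∀ᶠ x in 𝓝[<] x₀, 0 < f x := by
  filter_upwards [nhdsWithin_le_nhds (eventually_nhdsWithin_sign_eq_of_deriv_neg hf h₀),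
    self_mem_nhdsWithin] with x hx (hx₀ : x < x₀)
  rwa [sign_pos (sub_pos.2 hx₀), sign_eq_one_iff] at hx

section Profile

variable {m : ℝ → ℝ}

theorem deriv_neg_of_even (hmeven : ∀ t, m (-t) = m t) (t : ℝ) : deriv m (-t) = -deriv m t := by
  have h := deriv_comp_neg (f := m) (x := t)
  rw [show (fun x => m (-x)) = m from funext hmeven] at h
  linarith

theorem apply_abs_of_even (hmeven : ∀ t, m (-t) = m t) (t : ℝ) : m |t| = m t := by
  rcases abs_choice t with h | h <;> simp [h, hmeven]

theorem nonempty_of_tZero_pos (h : 0 < tZero m) : {t | 0 < t ∧ deriv m t < 0}.Nonempty := by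
  by_contra hS
  rw [not_nonempty_iff_eq_empty] at hS
  simp [tZero, hS] at h

theorem bddAbove_of_tZero_pos (h : 0 < tZero m) : BddAbove {t | 0 < t ∧ deriv m t < 0} := by
  by_contra hS
  simp [tZero, Real.sSup_of_not_bddAbove hS] at h

theorem deriv_deriv_eq_neg_gaussK_mul (hmpos : ∀ t, 0 < m t) (t : ℝ) :
    deriv (deriv m) t = -gaussK m t * m t := by
  rw [gaussK, neg_div, neg_neg, div_mul_cancel₀ _ (hmpos t).ne']

variable (hm : ContDiff ℝ 2 m) (hmpos : ∀ t, 0 < m t) (hmeven : ∀ t, m (-t) = m t)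
  (hKdec : AntitoneOn (gaussK m) (Ici 0))

include hm hmpos hmeven hKdec in
/- If `K(c) ≤ 0`, then `m'' ≥ 0` beyond `c` and `m'(c) ≤ m'(t) < 0` for some later `t`;
if `K(c) > 0`, then `m'' < 0` on `[0, c]` and `m'(c) < m'(0) = 0`. -/
theorem deriv_neg_of_lt_tZero (hS : {t | 0 < t ∧ deriv m t < 0}.Nonempty) {c : ℝ} (hc : 0 < c)
    (hct : c < tZero m) : deriv m c < 0 := by
  have hm' := hm.continuous_deriv (by norm_num)
  rcases le_or_gt (gaussK m c) 0 with hKc | hKc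
  · have hmono : MonotoneOn (deriv m) (Ici c) := by
      refine monotoneOn_of_deriv_nonneg (convex_Ici c) hm'.continuousOn
        hm.differentiable_deriv_two.differentiableOn fun x hx => ?_
      rw [interior_Ici] at hx
      have hKx : gaussK m x ≤ gaussK m c := hKdec hc.le (hc.trans hx).le hx.le
      rw [deriv_deriv_eq_neg_gaussK_mul hmpos]
      nlinarith [hmpos x]
    obtain ⟨t, ht, hct'⟩ := exists_lt_of_lt_csSup hS hct
    exact (hmono (mem_Ici.2 le_rfl) hct'.le hct'.le).trans_lt ht.2
  · have hanti : StrictAntiOn (deriv m) (Icc 0 c) := by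
      refine strictAntiOn_of_deriv_neg (convex_Icc 0 c) hm'.continuousOn fun x hx => ?_
      rw [interior_Icc] at hx
      have hKx : gaussK m c ≤ gaussK m x := hKdec hx.1.le hc.le hx.2.le
      rw [deriv_deriv_eq_neg_gaussK_mul hmpos]
      nlinarith [hmpos x]
    have h0 : deriv m 0 = 0 := by
      have h := deriv_neg_of_even hmeven 0
      rw [neg_zero] at h
      linarith
    simpa [h0] using hanti (left_mem_Icc.2 hc.le) (right_mem_Icc.2 hc.le) hc

include hm hmpos hmeven hKdec in
theorem strictAntiOn_Icc_tZero (hS : {t | 0 < t ∧ deriv m t < 0}.Nonempty) :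
    StrictAntiOn m (Icc 0 (tZero m)) :=
  strictAntiOn_of_deriv_neg (convex_Icc _ _) hm.continuous.continuousOn fun x hx => by
    rw [interior_Icc] at hx
    exact deriv_neg_of_lt_tZero hm hmpos hmeven hKdec hS hx.1 hx.2

include hm in
theorem monotoneOn_Ici_tZero (ht : 0 ≤ tZero m) (hbdd : BddAbove {t | 0 < t ∧ deriv m t < 0}) :
    MonotoneOn m (Ici (tZero m)) :=
  monotoneOn_of_deriv_nonneg (convex_Ici _) hm.continuous.continuousOn
    (hm.differentiable (by norm_num)).differentiableOn fun x hx => by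
      rw [interior_Ici] at hx
      by_contra! h
      exact (le_csSup hbdd ⟨ht.trans_lt hx, h⟩).not_gt hx

include hm hmpos hmeven hKdec in
theorem apply_tZero_le (ht : 0 < tZero m) (t : ℝ) : m (tZero m) ≤ m t := by
  rw [← apply_abs_of_even hmeven t]
  rcases le_total |t| (tZero m) with h | h
  · exact (strictAntiOn_Icc_tZero hm hmpos hmeven hKdec (nonempty_of_tZero_pos ht)).antitoneOn
      ⟨abs_nonneg t, h⟩ ⟨ht.le, le_rfl⟩ h
  · exact monotoneOn_Ici_tZero hm ht.le (bddAbove_of_tZero_pos ht) (mem_Ici.2 le_rfl) h h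

end Profile

/-- `±ξ` are the turning points of geodesics with Clairaut constant `ν`: `m > ν` on `(-ξ, ξ)`,
and `m` crosses the level `ν` transversally at `±ξ`. -/
structure IsTurningPoint (m : ℝ → ℝ) (ν ξ : ℝ) : Prop where
  differentiable : Differentiable ℝ m
  pos : ∀ t, 0 < m t
  even : ∀ t, m (-t) = m t
  pos_xi : 0 < ξ
  apply_eq : m ξ = ν
  deriv_neg : deriv m ξ < 0
  lt_apply : ∀ t, |t| < ξ → ν < m t

theorem isTurningPoint_xi {m : ℝ → ℝ} (hm : ContDiff ℝ 2 m) (hmpos : ∀ t, 0 < m t)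
    (hmeven : ∀ t, m (-t) = m t) (hKdec : AntitoneOn (gaussK m) (Ici 0)) {u ν : ℝ} (hu : 0 < u)
    (hut : u < tZero m) (hν₁ : infm m < ν) (hν₂ : ν < m u) :
    IsTurningPoint m ν (xi m ν) ∧ u < xi m ν := by
  have ht₀ : 0 < tZero m := hu.trans hut
  have hS := nonempty_of_tZero_pos ht₀
  have hanti := strictAntiOn_Icc_tZero hm hmpos hmeven hKdec hS
  have hlow : m (tZero m) < ν := by
    obtain ⟨w, hw⟩ := exists_lt_of_ciInf_lt hν₁
    exact (apply_tZero_le hm hmpos hmeven hKdec ht₀ w).trans_lt hw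
  obtain ⟨c, hc, hmc⟩ := intermediate_value_Ioo' hut.le hm.continuous.continuousOn ⟨hlow, hν₂⟩
  have hcI : c ∈ Icc 0 (tZero m) := ⟨hu.le.trans hc.1.le, hc.2.le⟩
  have hξ : xi m ν = c := by
    refine IsLeast.csInf_eq ⟨⟨hu.trans hc.1, hmc⟩, fun t ⟨ht, hmt⟩ => ?_⟩
    by_contra! h
    exact (hanti ⟨ht.le, h.le.trans hcI.2⟩ hcI h).ne (hmc.trans hmt.symm)
  rw [hξ]
  refine ⟨⟨hm.differentiable (by norm_num), hmpos, hmeven, hu.trans hc.1, hmc,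
    deriv_neg_of_lt_tZero hm hmpos hmeven hKdec hS (hu.trans hc.1) hc.2, fun t ht => ?_⟩, hc.1⟩
  rw [← hmc, ← apply_abs_of_even hmeven t]
  exact hanti ⟨abs_nonneg t, ht.le.trans hcI.2⟩ hcI ht

/-- `ds/dt` along a geodesic with Clairaut constant `ν` away from its turning points. -/
def lengthDensity (m : ℝ → ℝ) (ν t : ℝ) : ℝ := m t / √(m t ^ 2 - ν ^ 2)

namespace IsTurningPoint

variable {m : ℝ → ℝ} {ν ξ : ℝ} (hW : IsTurningPoint m ν ξ)
include hW

theorem nu_pos : 0 < ν := hW.apply_eq ▸ hW.pos ξ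

theorem lengthDensity_neg (t : ℝ) : lengthDensity m ν (-t) = lengthDensity m ν t := by
  simp [lengthDensity, hW.even]

theorem measurable_lengthDensity : Measurable (lengthDensity m ν) := by
  have := hW.differentiable.continuous
  unfold lengthDensity
  fun_prop

theorem continuousAt_lengthDensity {t : ℝ} (ht : |t| < ξ) :
    ContinuousAt (lengthDensity m ν) t := by
  have hpos : 0 < m t ^ 2 - ν ^ 2 := by nlinarith [hW.lt_apply t ht, hW.nu_pos]
  have := hW.differentiable.continuous
  exact ContinuousAt.div (by fun_prop) (by fun_prop) (Real.sqrt_pos.2 hpos).ne'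

/-- `m² - ν²` vanishes at `ξ` with slope `2νm'(ξ) < 0`. -/
theorem eventually_mul_lt_sq_sub_sq :
    ∀ᶠ t in 𝓝[<] ξ, -(ν * deriv m ξ) * (ξ - t) < m t ^ 2 - ν ^ 2 := by
  have hw : HasDerivAt (fun t => m t ^ 2 - ν ^ 2 - -(ν * deriv m ξ) * (ξ - t))
      (ν * deriv m ξ) ξ := by
    refine ((((hW.differentiable ξ).hasDerivAt.fun_pow 2).sub_const (ν ^ 2)).fun_sub
      (((hasDerivAt_id' ξ).const_sub ξ).const_mul _)).congr_deriv ?_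
    rw [hW.apply_eq]
    push_cast
    ring
  filter_upwards [eventually_pos_left_of_deriv_neg
    (hw.deriv ▸ mul_neg_of_pos_of_neg hW.nu_pos hW.deriv_neg) (by simp [hW.apply_eq])]
    with t ht
  linarith

theorem intervalIntegrable_zero_xi : IntervalIntegrable (lengthDensity m ν) volume 0 ξ := by
  set a := -(ν * deriv m ξ)
  have ha : 0 < a := neg_pos.2 (mul_neg_of_pos_of_neg hW.nu_pos hW.deriv_neg)
  have hnear : ∀ᶠ t in 𝓝[<] ξ, a * (ξ - t) < m t ^ 2 - ν ^ 2 ∧ m t < ν + 1 :=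
    hW.eventually_mul_lt_sq_sub_sq.and <| nhdsWithin_le_nhds <|
      hW.differentiable.continuous.continuousAt.eventually_lt_const (by linarith [hW.apply_eq])
  obtain ⟨l, hl, hsub⟩ := mem_nhdsLT_iff_exists_Ioo_subset.1 hnear
  set c := max l 0
  have hc0 : 0 ≤ c := le_max_right _ _
  have hcξ : c < ξ := max_lt hl hW.pos_xi
  have hleft : IntervalIntegrable (lengthDensity m ν) volume 0 c := by
    refine ContinuousOn.intervalIntegrable fun t ht =>
      (hW.continuousAt_lengthDensity ?_).continuousWithinAt
    rw [uIcc_of_le hc0] at ht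
    exact abs_lt.2 ⟨by linarith [ht.1, hW.pos_xi], ht.2.trans_lt hcξ⟩
  have hbound : IntervalIntegrable (fun t => (ν + 1) / √a * (ξ - t) ^ (-(1 / 2) : ℝ))
      volume c ξ := by
    have := (intervalIntegrable_rpow' (by norm_num : (-1 : ℝ) < -(1 / 2))).comp_sub_left ξ
      (a := 0) (b := ξ - c)
    simpa using this.symm.const_mul ((ν + 1) / √a)
  refine hleft.trans ?_
  rw [intervalIntegrable_iff_integrableOn_Ioo_of_le hcξ.le] at hbound ⊢
  refine hbound.mono' hW.measurable_lengthDensity.aestronglyMeasurable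
    (ae_restrict_of_forall_mem measurableSet_Ioo fun t ht => ?_)
  obtain ⟨hwt, hmt⟩ := hsub ⟨(le_max_left _ _).trans_lt ht.1, ht.2⟩
  have hξt : 0 < ξ - t := sub_pos.2 ht.2
  rw [lengthDensity, Real.norm_of_nonneg (div_nonneg (hW.pos t).le (Real.sqrt_nonneg _)),
    Real.rpow_neg hξt.le, ← Real.sqrt_eq_rpow, ← div_eq_mul_inv, div_div, ← Real.sqrt_mul ha.le]
  exact div_le_div₀ (by linarith [hW.nu_pos]) hmt.le (Real.sqrt_pos.2 (by positivity))
    (Real.sqrt_le_sqrt hwt.le)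

theorem intervalIntegrable_neg_xi_zero :
    IntervalIntegrable (lengthDensity m ν) volume (-ξ) 0 := by
  have := (IntervalIntegrable.iff_comp_neg (by simp)).1 hW.intervalIntegrable_zero_xi
  simpa [hW.lengthDensity_neg] using this.symm

theorem intervalIntegrable : IntervalIntegrable (lengthDensity m ν) volume (-ξ) ξ :=
  hW.intervalIntegrable_neg_xi_zero.trans hW.intervalIntegrable_zero_xi

theorem intervalIntegrable_of_mem {a b : ℝ} (ha : a ∈ Icc (-ξ) ξ) (hb : b ∈ Icc (-ξ) ξ) :
    IntervalIntegrable (lengthDensity m ν) volume a b := by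
  have hle : -ξ ≤ ξ := by linarith [hW.pos_xi]
  exact hW.intervalIntegrable.mono_set (uIcc_subset_uIcc (by rwa [uIcc_of_le hle])
    (by rwa [uIcc_of_le hle]))

theorem integral_eq_two_mul :
    ∫ x in -ξ..ξ, lengthDensity m ν x = 2 * ∫ x in -ξ..0, lengthDensity m ν x := by
  have h := integral_comp_neg (a := 0) (b := ξ) (lengthDensity m ν)
  simp only [hW.lengthDensity_neg, neg_zero] at h
  rw [← integral_add_adjacent_intervals hW.intervalIntegrable_neg_xi_zero
    hW.intervalIntegrable_zero_xi, h, two_mul]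

end IsTurningPoint

/-- The equations satisfied by the `t`-component of a unit-speed geodesic with Clairaut
constant `ν`, obtained by eliminating `θ' = ν / m(t)²`. -/
structure IsRadialMotion (m : ℝ → ℝ) (ν : ℝ) (T : ℝ → ℝ) : Prop where
  contDiff : ContDiff ℝ 2 T
  energy : ∀ s, m (T s) ^ 2 * deriv T s ^ 2 = m (T s) ^ 2 - ν ^ 2
  accel : ∀ s, m (T s) ^ 3 * deriv (deriv T) s = ν ^ 2 * deriv m (T s)

theorem _root_.IsUnitGeodesic.isRadialMotion {m : ℝ → ℝ} {γ : ℝ → ℝ × ℝ} {ν : ℝ}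
    (hγ : IsUnitGeodesic m γ) (hcl : HasClairaut m γ ν) :
    IsRadialMotion m ν (fun s => (γ s).1) where
  contDiff := hγ.1.fst
  energy s := by
    linear_combination m (γ s).1 ^ 2 * hγ.2.2.2 s -
      (m (γ s).1 ^ 2 * deriv (fun u => (γ u).2) s + ν) * hcl s
  accel s := by
    rw [hγ.2.1 s]
    linear_combination deriv m (γ s).1 * (m (γ s).1 ^ 2 * deriv (fun u => (γ u).2) s + ν) * hcl s

namespace IsRadialMotion

variable {m : ℝ → ℝ} {ν : ℝ} {T : ℝ → ℝ} (hT : IsRadialMotion m ν T)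
include hT

theorem continuous : Continuous T := hT.contDiff.continuous

theorem continuous_deriv : Continuous (deriv T) := hT.contDiff.continuous_deriv (by norm_num)

theorem hasDerivAt (s : ℝ) : HasDerivAt T (deriv T s) s :=
  (hT.contDiff.differentiable (by norm_num) s).hasDerivAt

theorem neg (hmeven : ∀ t, m (-t) = m t) : IsRadialMotion m ν (fun s => -T s) := by
  refine ⟨hT.contDiff.neg, fun s => ?_, fun s => ?_⟩
  · rw [deriv.fun_neg', hmeven, neg_sq]
    exact hT.energy s
  · rw [deriv.fun_neg', deriv.fun_neg', hmeven, deriv_neg_of_even hmeven]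
    linear_combination -hT.accel s

theorem lengthDensity_mul_deriv {s : ℝ} (hm : 0 < m (T s)) (hs : 0 < deriv T s) :
    lengthDensity m ν (T s) * deriv T s = 1 := by
  rw [lengthDensity, ← hT.energy s, ← mul_pow, Real.sqrt_sq (by positivity)]
  field_simp

end IsRadialMotion

namespace IsTurningPoint

variable {m : ℝ → ℝ} {ν ξ : ℝ} (hW : IsTurningPoint m ν ξ) {T : ℝ → ℝ}
  (hT : IsRadialMotion m ν T)
include hW hT

theorem le_abs_of_deriv_eq_zero {s : ℝ} (hs : deriv T s = 0) : ξ ≤ |T s| := by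
  by_contra! h
  have hlt := hW.lt_apply _ h
  have he := hT.energy s
  rw [hs] at he
  nlinarith [hW.nu_pos]

theorem deriv_eq_zero_of_eq_neg {s : ℝ} (hs : T s = -ξ) : deriv T s = 0 := by
  have he := hT.energy s
  rw [hs, hW.even, hW.apply_eq, sub_self, mul_eq_zero] at he
  exact pow_eq_zero_iff two_ne_zero |>.1 (he.resolve_left (pow_pos hW.nu_pos 2).ne')

theorem deriv_deriv_pos_of_eq_neg {s : ℝ} (hs : T s = -ξ) : 0 < deriv (deriv T) s := by
  have ha := hT.accel s
  rw [hs, hW.even, hW.apply_eq, deriv_neg_of_even hW.even] at ha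
  have := hW.deriv_neg
  have := hW.nu_pos
  nlinarith [pow_pos this 3, pow_pos this 2]

theorem exists_hit_of_deriv_nonneg {a b : ℝ} (hx : |T a| < ξ) (ha : deriv T a < 0) (hab : a ≤ b)
    (hb : 0 ≤ deriv T b) : ∃ d ∈ Ioc a b, T d = -ξ := by
  obtain ⟨c, hc, hc0, hneg⟩ := exists_first_hit hT.continuous_deriv hab ha hb
  have hanti : StrictAntiOn T (Icc a c) :=
    strictAntiOn_of_deriv_neg (convex_Icc a c) hT.continuous.continuousOn fun s hs => by
      rw [interior_Icc] at hs
      exact hneg s ⟨hs.1.le, hs.2⟩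
  have hlt : T c < T a := hanti (left_mem_Icc.2 hc.1.le) (right_mem_Icc.2 hc.1.le) hc.1
  have hle : T c ≤ -ξ := by
    rcases le_abs'.1 (hW.le_abs_of_deriv_eq_zero hT hc0) with h | h
    · exact h
    · linarith [(abs_lt.1 hx).2]
  obtain ⟨d, hd, hTd⟩ := intermediate_value_Icc' hc.1.le hT.continuous.continuousOn
    ⟨hle, (abs_lt.1 hx).1.le⟩
  refine ⟨d, ⟨hd.1.lt_of_ne ?_, hd.2.trans hc.2⟩, hTd⟩
  rintro rfl
  linarith [(abs_lt.1 hx).1]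

theorem integral_lengthDensity_eq {a b : ℝ} (hab : a < b) (ha : -ξ ≤ T a) (hb : T b ≤ ξ)
    (hpos : ∀ s ∈ Ioo a b, 0 < deriv T s) :
    ∫ x in T a..T b, lengthDensity m ν x = b - a := by
  have hmono : StrictMonoOn T (Icc a b) := strictMonoOn_of_deriv_pos (convex_Icc a b)
    hT.continuous.continuousOn (by rwa [interior_Icc])
  have hle : -ξ ≤ ξ := by linarith [hW.pos_xi]
  have hint : ∀ z ∈ Icc (-ξ) ξ, IntervalIntegrable (lengthDensity m ν) volume (-ξ) z :=
    fun _ => hW.intervalIntegrable_of_mem (left_mem_Icc.2 hle)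
  set Φ : ℝ → ℝ := fun z => ∫ x in -ξ..z, lengthDensity m ν x
  have hΦc : ContinuousOn Φ (Icc (-ξ) ξ) := by
    simpa [uIcc_of_le hle] using
      continuousOn_primitive_interval' hW.intervalIntegrable left_mem_uIcc
  have hΦd : ∀ z ∈ Ioo (-ξ) ξ, HasDerivAt Φ (lengthDensity m ν z) z := fun z hz =>
    integral_hasDerivAt_right (hint z (Ioo_subset_Icc_self hz))
      hW.measurable_lengthDensity.stronglyMeasurable.stronglyMeasurableAtFilter
      (hW.continuousAt_lengthDensity (abs_lt.2 hz))
  have hmaps : MapsTo T (Icc a b) (Icc (-ξ) ξ) := fun s hs =>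
    ⟨ha.trans (hmono.monotoneOn ⟨le_rfl, hab.le⟩ hs hs.1),
      (hmono.monotoneOn hs ⟨hab.le, le_rfl⟩ hs.2).trans hb⟩
  -- `Φ ∘ T - id` is constant: its derivative is `f(T) T' - 1 = 0`
  obtain ⟨c, -, hc⟩ := exists_hasDerivAt_eq_slope (fun s => Φ (T s) - s) (fun _ => 0) hab
    ((hΦc.comp hT.continuous.continuousOn hmaps).sub continuousOn_id) fun s hs => by
      have hTs : T s ∈ Ioo (-ξ) ξ :=
        ⟨ha.trans_lt (hmono ⟨le_rfl, hab.le⟩ (Ioo_subset_Icc_self hs) hs.1),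
          (hmono (Ioo_subset_Icc_self hs) ⟨hab.le, le_rfl⟩ hs.2).trans_le hb⟩
      have := ((hΦd _ hTs).comp s (hT.hasDerivAt s)).sub (hasDerivAt_id s)
      rwa [hT.lengthDensity_mul_deriv (hW.pos _) (hpos s hs), sub_self] at this
  rw [eq_comm, div_eq_zero_iff, or_iff_left (sub_ne_zero.2 hab.ne')] at hc
  rw [← integral_interval_sub_left (hint _ (hmaps ⟨hab.le, le_rfl⟩))
    (hint _ (hmaps ⟨le_rfl, hab.le⟩))]
  linarith

theorem deriv_pos_after_turn {s₁ s₂ y : ℝ} (hs₁ : T s₁ = -ξ) (hy : |y| < ξ)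
    (hs₂ : IsLeast {s | s₁ < s ∧ T s = y} s₂) : ∀ s ∈ Ioo s₁ s₂, 0 < deriv T s := by
  have hbelow := lt_of_mem_Ico_of_isLeast hT.continuous
    (by rw [hs₁]; exact (abs_lt.1 hy).1) hs₂
  obtain ⟨u, hu, hsub⟩ := mem_nhdsGT_iff_exists_Ioo_subset.1 (eventually_pos_right_of_deriv_pos
    (hW.deriv_deriv_pos_of_eq_neg hT hs₁) (hW.deriv_eq_zero_of_eq_neg hT hs₁))
  intro sb hsb
  by_contra! hneg
  obtain ⟨p, hp⟩ := exists_between (lt_min hu hsb.1)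
  have hpsb : p < sb := hp.2.trans_le (min_le_right _ _)
  have hpos : ∀ s ∈ Ioo s₁ p, 0 < deriv T s :=
    fun s hs => hsub ⟨hs.1, hs.2.trans (hp.2.trans_le (min_le_left _ _))⟩
  have hTp : -ξ < T p := hs₁ ▸ strictMonoOn_of_deriv_pos (convex_Icc s₁ p)
    hT.continuous.continuousOn (by rwa [interior_Icc]) ⟨le_rfl, hp.1.le⟩ ⟨hp.1.le, le_rfl⟩ hp.1
  have hTp' : T p < ξ := (hbelow p ⟨hp.1.le, hpsb.trans hsb.2⟩).trans (abs_lt.1 hy).2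
  -- after the turn, a further critical point of `T` would have to lie at `ξ`, beyond `y`
  obtain ⟨d, hd, hTd⟩ := hW.exists_hit_of_deriv_nonneg (hT.neg hW.even) (a := p) (b := sb)
    (by rw [abs_neg]; exact abs_lt.2 ⟨hTp, hTp'⟩)
    (by simpa using hsub ⟨hp.1, hp.2.trans_le (min_le_left _ _)⟩) hpsb.le (by simpa using hneg)
  have := hbelow d ⟨hp.1.le.trans hd.1.le, hd.2.trans_lt hsb.2⟩
  linarith [(abs_lt.1 hy).2]

theorem hitting_time_eq_integral {s₁ s₂ : ℝ} (hx : |T 0| < ξ) (h0 : deriv T 0 < 0)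
    (hs₁ : IsLeast {s | 0 < s ∧ T s = -ξ} s₁) (hs₂ : IsLeast {s | s₁ < s ∧ T s = -T 0} s₂) :
    s₂ = ∫ x in -ξ..ξ, lengthDensity m ν x := by
  have hdesc : ∀ s ∈ Ioo 0 s₁, deriv T s < 0 := fun s hs => by
    by_contra! h
    obtain ⟨d, hd, hTd⟩ := hW.exists_hit_of_deriv_nonneg hT hx h0 hs.1.le h
    exact (hs₁.2 ⟨hd.1, hTd⟩).not_gt (hd.2.trans_lt hs.2)
  have h₁ := hW.integral_lengthDensity_eq (hT.neg hW.even) hs₁.1.1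
    (by linarith [(abs_lt.1 hx).2]) (by simp [hs₁.1.2]) fun s hs => by simpa using hdesc s hs
  have h₂ := hW.integral_lengthDensity_eq hT hs₂.1.1 (by rw [hs₁.1.2])
    (by rw [hs₂.1.2]; linarith [(abs_lt.1 hx).1])
    (hW.deriv_pos_after_turn hT hs₁.1.2 (by rwa [abs_neg]) hs₂)
  simp only [hs₁.1.2, hs₂.1.2, neg_neg, sub_zero] at h₁ h₂
  have hmem : -T 0 ∈ Icc (-ξ) ξ := by constructor <;> linarith [abs_lt.1 hx]
  have hle : -ξ ≤ ξ := by linarith [hW.pos_xi]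
  rw [← integral_add_adjacent_intervals (hW.intervalIntegrable_of_mem (left_mem_Icc.2 hle) hmem)
    (hW.intervalIntegrable_of_mem hmem (right_mem_Icc.2 hle))]
  linarith

theorem exists_isLeast_turn {s₂ y : ℝ} (hx : |T 0| < ξ) (h0 : deriv T 0 < 0) (hy : T 0 < y)
    (hs₂ : IsLeast {s | 0 < s ∧ T s = y} s₂) :
    ∃ s₁, IsLeast {s | 0 < s ∧ T s = -ξ} s₁ ∧ IsLeast {s | s₁ < s ∧ T s = y} s₂ := by
  obtain ⟨c, hc, hTc⟩ := exists_hasDerivAt_eq_slope T (deriv T) hs₂.1.1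
    hT.continuous.continuousOn fun s _ => hT.hasDerivAt s
  have hc' : 0 < deriv T c := by
    rw [hTc, hs₂.1.2]
    exact div_pos (by linarith) (by linarith [hs₂.1.1])
  obtain ⟨d, hd, hTd⟩ := hW.exists_hit_of_deriv_nonneg hT hx h0 hc.1.le hc'.le
  obtain ⟨s₁, hs₁, hTs₁, hbefore⟩ := exists_first_hit (g := fun s => -T s) hT.continuous.neg
    hd.1.le (y := ξ) (by linarith [(abs_lt.1 hx).1]) (by rw [hTd, neg_neg])
  refine ⟨s₁, ⟨⟨hs₁.1, by linarith⟩, fun s hs => ?_⟩,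
    ⟨⟨hs₁.2.trans_lt (hd.2.trans_lt hc.2), hs₂.1.2⟩, fun s hs => hs₂.2 ⟨hs₁.1.trans hs.1, hs.2⟩⟩⟩
  by_contra! h
  have := hbefore s ⟨hs.1.le, h⟩
  linarith [hs.2]

end IsTurningPoint

theorem _root_.IsUnitGeodesic.wLength_eq {m : ℝ → ℝ} {γ : ℝ → ℝ × ℝ} (hγ : IsUnitGeodesic m γ)
    (a : ℝ) : wLength m γ 0 a = a := by
  simp [wLength, hγ.2.2.2]

end WarpedPlane

theorem stmt14_general (m : ℝ → ℝ) (hm : ContDiff ℝ (⊤:ℕ∞) m) (hmpos : ∀ t, 0 < m t)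
    (hmeven : ∀ t, m (-t) = m t)
    (hKdec : AntitoneOn (gaussK m) (Ici 0))
    (u : ℝ) (hu : 0 < u) (hut : u < tZero m)
    (ν : ℝ) (hν₁ : infm m < ν) (hν₂ : ν < m u)
    (α β : ℝ → ℝ × ℝ)
    (hα : IsUnitGeodesic m α) (hβ : IsUnitGeodesic m β)
    (hα0 : α 0 = (-u, 0)) (hβ0 : β 0 = (-u, 0))
    (hαcl : HasClairaut m α ν) (hβcl : HasClairaut m β ν)
    (hα' : deriv (fun s => (α s).1) 0 < 0) (hβ' : 0 < deriv (fun s => (β s).1) 0)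
    (s₂ s₁p s₂p : ℝ)
    (hs₂ : IsLeast {s : ℝ | 0 < s ∧ (α s).1 = u} s₂)
    (hs₁p : IsLeast {s : ℝ | 0 < s ∧ (β s).1 = xi m ν} s₁p)
    (hs₂p : IsLeast {s : ℝ | s₁p < s ∧ (β s).1 = u} s₂p) :
    wLength m α 0 s₂ = wLength m β 0 s₂p ∧
    wLength m α 0 s₂ = ell m ν ∧ s₂ = s₂p := by
  obtain ⟨hW, huξ⟩ := WarpedPlane.isTurningPoint_xi (hm.of_le (WithTop.coe_le_coe.2 le_top))
    hmpos hmeven hKdec hu hut hν₁ hν₂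
  have hα00 : (α 0).1 = -u := by rw [hα0]
  have hβ00 : (β 0).1 = -u := by rw [hβ0]
  have hTα := hα.isRadialMotion hαcl
  have hTβ := (hβ.isRadialMotion hβcl).neg hW.even
  have hx : |-u| < xi m ν := by rw [abs_neg, abs_of_pos hu]; exact huξ
  obtain ⟨s₁, hs₁, hs₂'⟩ := hW.exists_isLeast_turn hTα (by rwa [hα00]) hα'
    (by rw [hα00]; linarith) hs₂
  have hαtime := hW.hitting_time_eq_integral hTα (by rwa [hα00]) hα' hs₁
    (by rwa [hα00, neg_neg])
  have hβtime := hW.hitting_time_eq_integral hTβ (by simpa [hβ00] using hx) (by simpa using hβ')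
    (by simpa [neg_eq_iff_eq_neg] using hs₁p) (by simpa [hβ00] using hs₂p)
  rw [hα.wLength_eq, hβ.wLength_eq]
  exact ⟨hαtime.trans hβtime.symm, hαtime.trans hW.integral_eq_two_mul, hαtime.trans hβtime.symm⟩

/-- Lemma 5.2: in the situation of Lemma 5.1, the geodesic segments
`α|[0,s₂]` and `β|[0,s₂⁺]` have equal length, both equal to
`l(ν) = 2∫_{-ξ(ν)}^0 m(t)/√(m(t)² - ν²) dt`; in particular `s₂ = s₂⁺`. -/
theorem stmt14 (m : ℝ → ℝ) (hm : ContDiff ℝ (⊤:ℕ∞) m) (hmpos : ∀ t, 0 < m t)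
    (hmeven : ∀ t, m (-t) = m t)
    (hK0 : 0 < gaussK m 0) (hKdec : AntitoneOn (gaussK m) (Ici 0))
    (u : ℝ) (hu : 0 < u) (hut : u < tZero m)
    (ν : ℝ) (hν₁ : infm m < ν) (hν₂ : ν < m u)
    (α β : ℝ → ℝ × ℝ)
    (hα : IsUnitGeodesic m α) (hβ : IsUnitGeodesic m β)
    (hα0 : α 0 = (-u, 0)) (hβ0 : β 0 = (-u, 0))
    (hαcl : HasClairaut m α ν) (hβcl : HasClairaut m β ν)
    (hα' : deriv (fun s => (α s).1) 0 < 0) (hβ' : 0 < deriv (fun s => (β s).1) 0)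
    (s₂ s₁p s₂p : ℝ)
    (hs₂ : IsLeast {s : ℝ | 0 < s ∧ (α s).1 = u} s₂)
    (hs₁p : IsLeast {s : ℝ | 0 < s ∧ (β s).1 = xi m ν} s₁p)
    (hs₂p : IsLeast {s : ℝ | s₁p < s ∧ (β s).1 = u} s₂p) :
    wLength m α 0 s₂ = wLength m β 0 s₂p ∧
    wLength m α 0 s₂ = ell m ν ∧ s₂ = s₂p :=
  stmt14_general m hm hmpos hmeven hKdec u hu hut ν hν₁ hν₂ α β hα hβ hα0 hβ0 hαcl hβcl hα' hβ' s₂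
    s₁p s₂p hs₂ hs₁p hs₂p
end
end
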